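/- Let E be a finite-dimensional real inner product space, F : E → ℝ differentiable with F ≥ 0, θ ∈ (0,1), and α ≥ 0. Suppose that for every w₀ ∈ E there exists a gradient-flow trajectory w : [0,∞) → E of F with w(0) = w₀ satisfying F(w(t)) ≤ F(w₀) / (1 + α θ F(w₀)^θ · t)^{1/θ} for all t ≥ 0. Then F satisfies the Kurdyka–Łojasiewicz inequality: α·F(u)^{1+θ} ≤ ‖∇F(u)‖² for every u ∈ E. -/

import Mathlib

/-!
Along the trajectory started at `u`, the energy `t ↦ F (w t)` has derivative `-‖∇F u‖²` at
`t = 0`, while the rate bound `t ↦ F u / (1 + αθ F(u)^θ t)^(1/θ)` agrees with it at `t = 0` and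
has derivative `-α F(u)^(1+θ)` there. A function lying below another to the right of a point
where they touch has the smaller right derivative, which is the KL inequality at `u`.
-/

open RealInnerProductSpace Set

theorem HasDerivWithinAt.le_of_eq_of_forall_le_Ici {f g : ℝ → ℝ} {f' g' a : ℝ}
    (hf : HasDerivWithinAt f f' (Ici a) a) (hg : HasDerivWithinAt g g' (Ici a) a)
    (heq : f a = g a) (hle : ∀ t, a ≤ t → f t ≤ g t) : f' ≤ g' := by
  have hmin : IsLocalMinOn (g - f) (Ici a) a :=
    Filter.eventually_of_mem self_mem_nhdsWithin fun t ht => by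
      simpa [heq] using hle t ht
  have hone : (1 : ℝ) ∈ posTangentConeAt (Ici a) a :=
    one_mem_posTangentConeAt_iff_frequently.2
      (eventually_nhdsWithin_of_forall (s := Ioi a) fun _ ht => mem_Ici.2 ht.le).frequently
  simpa using hmin.hasFDerivWithinAt_nonneg (hg.sub hf).hasFDerivWithinAt hone

theorem HasGradientAt.comp_hasDerivAt {E : Type*} [NormedAddCommGroup E]
    [InnerProductSpace ℝ E] [CompleteSpace E] {F : E → ℝ} {g v : E} {w : ℝ → E} {t : ℝ}
    (hF : HasGradientAt F g (w t)) (hw : HasDerivAt w v t) :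
    HasDerivAt (fun s => F (w s)) ⟪g, v⟫ t := by
  have := hF.hasFDerivAt.comp_hasDerivAt t hw
  rwa [InnerProductSpace.toDual_apply_apply] at this

theorem hasDerivAt_div_one_add_mul_rpow_zero (C c p : ℝ) :
    HasDerivAt (fun t => C / (1 + c * t) ^ p) (-(p * c * C)) 0 := by
  have hbase : HasDerivAt (fun t : ℝ => 1 + c * t) c 0 := by
    simpa using ((hasDerivAt_id (0 : ℝ)).const_mul c).const_add 1
  refine ((hasDerivAt_const (0 : ℝ) C).div (hbase.rpow_const (p := p) (Or.inl (by simp)))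
    (by simp)).congr_deriv ?_
  simp only [mul_zero, add_zero, Real.one_rpow]
  ring

theorem gradient_flow_rate_implies_kl_general
    {E : Type*} [NormedAddCommGroup E] [InnerProductSpace ℝ E] [FiniteDimensional ℝ E]
    (F : E → ℝ) (hF : Differentiable ℝ F) (hFnonneg : ∀ u, 0 ≤ F u)
    (θ : ℝ) (hθ : θ ∈ Set.Ioo (0 : ℝ) 1) (α : ℝ)
    (hrate : ∀ w₀ : E, ∃ w : ℝ → E, w 0 = w₀ ∧
      (∀ t : ℝ, 0 ≤ t → HasDerivAt w (-gradient F (w t)) t) ∧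
      (∀ t : ℝ, 0 ≤ t →
        F (w t) ≤ F w₀ / (1 + α * θ * F w₀ ^ θ * t) ^ (1 / θ))) :
    ∀ u : E, α * F u ^ (1 + θ) ≤ ‖gradient F u‖ ^ 2 := by
  intro u
  obtain ⟨w, hw0, hflow, hbound⟩ := hrate u
  have henergy : HasDerivAt (fun t => F (w t)) (-‖gradient F u‖ ^ 2) 0 := by
    have := (hw0 ▸ (hF u).hasGradientAt).comp_hasDerivAt (hflow 0 le_rfl)
    rwa [hw0, inner_neg_right, real_inner_self_eq_norm_sq] at this
  have hslope := henergy.hasDerivWithinAt.le_of_eq_of_forall_le_Ici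
    (hasDerivAt_div_one_add_mul_rpow_zero (F u) (α * θ * F u ^ θ) (1 / θ)).hasDerivWithinAt
    (by simp [hw0]) hbound
  have hrate_slope : 1 / θ * (α * θ * F u ^ θ) * F u = α * F u ^ (1 + θ) := by
    rw [Real.rpow_one_add' (hFnonneg u) (by linarith [hθ.1])]
    field_simp [hθ.1.ne']
  linarith

/-- A polynomial rate of convergence for gradient flow from every initial point
implies the Kurdyka–Łojasiewicz inequality. -/
theorem gradient_flow_rate_implies_kl
    {E : Type*} [NormedAddCommGroup E] [InnerProductSpace ℝ E] [FiniteDimensional ℝ E]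
    (F : E → ℝ) (hF : Differentiable ℝ F) (hFnonneg : ∀ u, 0 ≤ F u)
    (θ : ℝ) (hθ : θ ∈ Set.Ioo (0 : ℝ) 1) (α : ℝ) (hα : 0 ≤ α)
    (hrate : ∀ w₀ : E, ∃ w : ℝ → E, w 0 = w₀ ∧
      (∀ t : ℝ, 0 ≤ t → HasDerivAt w (-gradient F (w t)) t) ∧
      (∀ t : ℝ, 0 ≤ t →
        F (w t) ≤ F w₀ / (1 + α * θ * F w₀ ^ θ * t) ^ (1 / θ))) :
    ∀ u : E, α * F u ^ (1 + θ) ≤ ‖gradient F u‖ ^ 2 :=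
  gradient_flow_rate_implies_kl_general F hF hFnonneg θ hθ α hrate
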